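/- Let W be a finite Weyl group of a crystallographic root system Φ and β, γ ∈ Φ⁺ with ⟨β,γ⟩ = 0 (orthogonal roots). Then the indicator random variables X_β and X_γ (of the events w(β) ∈ Φ⁻ and w(γ) ∈ Φ⁻ for w uniform in W) are independent. -/

import Mathlib

/-!
Right multiplication by the reflection `s_β` is a bijection of `W` which replaces `w β` by
`-w β`, hence toggles `X_β`, and which fixes `w γ`, since `s_β γ = γ`. So `X_β` is a fair coin,
also after conditioning on `X_γ`.
-/

open scoped Classical

noncomputable section

/-- A finite, reduced, crystallographic root system spanning `ℝⁿ`,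
together with a choice of positive system. -/
structure CrystRootSystem (n : ℕ) where
  /-- the finite set of roots -/
  roots : Finset (EuclideanSpace ℝ (Fin n))
  nonzero : ∀ β ∈ roots, β ≠ 0
  neg_mem : ∀ β ∈ roots, -β ∈ roots
  spanning : Submodule.span ℝ (roots : Set (EuclideanSpace ℝ (Fin n))) = ⊤
  reflect_mem : ∀ α ∈ roots, ∀ β ∈ roots,
    β - (2 * (inner ℝ α β : ℝ) / (inner ℝ α α : ℝ)) • α ∈ roots
  cryst : ∀ α ∈ roots, ∀ β ∈ roots, ∃ k : ℤ,
    2 * (inner ℝ α β : ℝ) / (inner ℝ α α : ℝ) = (k : ℝ)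
  reduced : ∀ α ∈ roots, ∀ c : ℝ, c • α ∈ roots → c = 1 ∨ c = -1
  /-- the positive roots -/
  pos : Finset (EuclideanSpace ℝ (Fin n))
  pos_def : ∃ f : EuclideanSpace ℝ (Fin n) →ₗ[ℝ] ℝ, (∀ β ∈ roots, f β ≠ 0) ∧
    ∀ β, β ∈ pos ↔ β ∈ roots ∧ 0 < f β

variable {n : ℕ}

/-- `w` is the orthogonal reflection in the root `β`. -/
def IsReflectionIn (β : EuclideanSpace ℝ (Fin n))
    (w : EuclideanSpace ℝ (Fin n) ≃ₗᵢ[ℝ] EuclideanSpace ℝ (Fin n)) : Prop :=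
  ∀ v, w v = v - (2 * (inner ℝ β v : ℝ) / (inner ℝ β β : ℝ)) • β

/-- The Weyl group, generated by the reflections in the roots. -/
def CrystRootSystem.weyl (R : CrystRootSystem n) :
    Subgroup (EuclideanSpace ℝ (Fin n) ≃ₗᵢ[ℝ] EuclideanSpace ℝ (Fin n)) :=
  Subgroup.closure {w | ∃ β ∈ R.roots, IsReflectionIn β w}

/-- The simple roots: indecomposable positive roots. -/
def CrystRootSystem.simples (R : CrystRootSystem n) : Finset (EuclideanSpace ℝ (Fin n)) :=
  R.pos.filter fun β => ¬ ∃ γ ∈ R.pos, ∃ δ ∈ R.pos, β = γ + δ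

/-- The parabolic subgroup generated by the reflections in the roots of `Γ`. -/
def parabolicSubgroup (Γ : Finset (EuclideanSpace ℝ (Fin n))) :
    Subgroup (EuclideanSpace ℝ (Fin n) ≃ₗᵢ[ℝ] EuclideanSpace ℝ (Fin n)) :=
  Subgroup.closure {w | ∃ α ∈ Γ, IsReflectionIn α w}

section Counting

variable {α : Type*} {p q : α → Prop}

theorem Nat.card_eq_two_mul_card_subtype_of_swap [Finite α] (e : α ≃ α)
    (hp : ∀ x, p (e x) ↔ ¬ p x) : Nat.card α = 2 * Nat.card {x // p x} := by
  have hcompl : Nat.card {x // ¬ p x} = Nat.card {x // p x} :=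
    (Nat.card_congr (e.subtypeEquiv fun x => by rw [hp, not_not])).symm
  rw [← Nat.card_congr (Equiv.sumCompl p), Nat.card_sum, hcompl, two_mul]

theorem Nat.card_and_mul_card_eq_mul [Finite α] (e : α ≃ α)
    (hp : ∀ x, p (e x) ↔ ¬ p x) (hq : ∀ x, q (e x) ↔ q x) :
    Nat.card {x // p x ∧ q x} * Nat.card α = Nat.card {x // p x} * Nat.card {x // q x} := by
  have hα := Nat.card_eq_two_mul_card_subtype_of_swap e hp
  have hq' : Nat.card {x // q x} = 2 * Nat.card {x // p x ∧ q x} := by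
    rw [Nat.card_eq_two_mul_card_subtype_of_swap (p := fun x : {x // q x} => p x.1)
        (e.subtypeEquiv fun x => (hq x).symm) fun x => hp x.1,
      Nat.card_congr (Equiv.subtypeSubtypeEquivSubtypeInter q p),
      Nat.card_congr (Equiv.subtypeEquivRight fun x => and_comm)]
  rw [hα, hq']
  ring

theorem card_and_div_card_eq_mul (e : α ≃ α)
    (hp : ∀ x, p (e x) ↔ ¬ p x) (hq : ∀ x, q (e x) ↔ q x) :
    (Nat.card {x // p x ∧ q x} : ℚ) / Nat.card α =
      Nat.card {x // p x} / Nat.card α * (Nat.card {x // q x} / Nat.card α) := by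
  cases finite_or_infinite α
  · rcases eq_or_ne (Nat.card α) 0 with h0 | h0
    · simp [h0]
    · have key := Nat.card_and_mul_card_eq_mul e hp hq
      field_simp
      exact_mod_cast key
  · simp

end Counting

section Reflection

variable {β : EuclideanSpace ℝ (Fin n)}
  {s : EuclideanSpace ℝ (Fin n) ≃ₗᵢ[ℝ] EuclideanSpace ℝ (Fin n)}

theorem exists_isReflectionIn (β : EuclideanSpace ℝ (Fin n)) : ∃ s, IsReflectionIn β s := by
  refine ⟨Submodule.reflection (ℝ ∙ β)ᗮ, fun v => ?_⟩
  rw [Submodule.reflection_apply, Submodule.starProjection_orthogonal_val,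
    Submodule.starProjection_singleton, real_inner_self_eq_norm_sq]
  simp only [RCLike.ofReal_real_eq_id, id_eq]
  module

theorem IsReflectionIn.apply_self (hs : IsReflectionIn β s) (hβ : β ≠ 0) : s β = -β := by
  rw [hs β, mul_div_assoc, div_self (inner_self_ne_zero.mpr hβ), mul_one]
  module

theorem IsReflectionIn.apply_of_inner_eq_zero (hs : IsReflectionIn β s)
    {v : EuclideanSpace ℝ (Fin n)} (hv : (inner ℝ β v : ℝ) = 0) : s v = v := by
  simp [hs v, hv]

theorem IsReflectionIn.apply_apply (hs : IsReflectionIn β s) (hβ : β ≠ 0)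
    (v : EuclideanSpace ℝ (Fin n)) : s (s v) = v := by
  have hββ : (inner ℝ β β : ℝ) ≠ 0 := inner_self_ne_zero.mpr hβ
  have hsv : (inner ℝ β (s v) : ℝ) = -inner ℝ β v := by
    rw [hs v, inner_sub_right, real_inner_smul_right]
    field_simp
    ring
  rw [hs (s v), hsv, hs v, mul_neg, neg_div, neg_smul, sub_neg_eq_add,
    sub_add_cancel]

theorem IsReflectionIn.inv_apply (hs : IsReflectionIn β s) (hβ : β ≠ 0)
    (v : EuclideanSpace ℝ (Fin n)) : s⁻¹ v = s v :=
  s.symm_apply_eq.mpr (hs.apply_apply hβ v).symm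

end Reflection

namespace CrystRootSystem

variable (R : CrystRootSystem n) {α : EuclideanSpace ℝ (Fin n)}

theorem mem_roots_of_mem_pos (hα : α ∈ R.pos) : α ∈ R.roots := by
  obtain ⟨f, -, hpos⟩ := R.pos_def
  exact ((hpos α).mp hα).1

theorem neg_mem_pos_iff (hα : α ∈ R.roots) : -α ∈ R.pos ↔ α ∉ R.pos := by
  obtain ⟨f, hf, hpos⟩ := R.pos_def
  rw [hpos, hpos, map_neg, neg_pos]
  constructor
  · rintro ⟨-, hneg⟩ ⟨-, hpos⟩
    linarith
  · intro h
    exact ⟨R.neg_mem α hα, (hf α hα).lt_or_gt.resolve_right fun h' => h ⟨hα, h'⟩⟩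

theorem apply_mem_roots {w : EuclideanSpace ℝ (Fin n) ≃ₗᵢ[ℝ] EuclideanSpace ℝ (Fin n)}
    (hw : w ∈ R.weyl) (hα : α ∈ R.roots) : w α ∈ R.roots := by
  induction hw using Subgroup.closure_induction'' generalizing α with
  | mem s hs =>
    obtain ⟨β, hβ, hs⟩ := hs
    rw [hs α]
    exact R.reflect_mem β hβ α hα
  | inv_mem s hs =>
    obtain ⟨β, hβ, hs⟩ := hs
    rw [hs.inv_apply (R.nonzero β hβ), hs α]
    exact R.reflect_mem β hβ α hα
  | one => exact hα
  | mul x y _ _ hx hy => exact hx (hy hα)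

end CrystRootSystem

theorem orthogonal_roots_independent_general (R : CrystRootSystem n)
    (β γ : EuclideanSpace ℝ (Fin n)) (hβ : β ∈ R.pos)
    (horth : (inner ℝ β γ : ℝ) = 0) :
    (Nat.card {w : R.weyl // -(w.1 β) ∈ R.pos ∧ -(w.1 γ) ∈ R.pos} : ℚ) /
        (Nat.card R.weyl : ℚ) =
      (Nat.card {w : R.weyl // -(w.1 β) ∈ R.pos} : ℚ) / (Nat.card R.weyl : ℚ) *
        ((Nat.card {w : R.weyl // -(w.1 γ) ∈ R.pos} : ℚ) / (Nat.card R.weyl : ℚ)) := by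
  have hβR := R.mem_roots_of_mem_pos hβ
  obtain ⟨s, hs⟩ := exists_isReflectionIn β
  have hsW : s ∈ R.weyl := Subgroup.subset_closure ⟨β, hβR, hs⟩
  refine card_and_div_card_eq_mul (Equiv.mulRight ⟨s, hsW⟩) (fun w => ?_) (fun w => ?_)
  · change -(w.1 (s β)) ∈ R.pos ↔ ¬ -(w.1 β) ∈ R.pos
    rw [hs.apply_self (R.nonzero β hβR), map_neg, neg_neg,
      R.neg_mem_pos_iff (R.apply_mem_roots w.2 hβR), not_not]
  · change -(w.1 (s γ)) ∈ R.pos ↔ -(w.1 γ) ∈ R.pos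
    rw [hs.apply_of_inner_eq_zero horth]

/-- For orthogonal positive roots `β, γ`, the indicator random variables
`X_β, X_γ` of the events `w(β) ∈ Φ⁻` and `w(γ) ∈ Φ⁻` (for `w` uniform in the
Weyl group) are independent. -/
theorem orthogonal_roots_independent (R : CrystRootSystem n)
    (β γ : EuclideanSpace ℝ (Fin n)) (hβ : β ∈ R.pos) (hγ : γ ∈ R.pos)
    (horth : (inner ℝ β γ : ℝ) = 0) :
    (Nat.card {w : R.weyl // -(w.1 β) ∈ R.pos ∧ -(w.1 γ) ∈ R.pos} : ℚ) /
        (Nat.card R.weyl : ℚ) =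
      (Nat.card {w : R.weyl // -(w.1 β) ∈ R.pos} : ℚ) / (Nat.card R.weyl : ℚ) *
        ((Nat.card {w : R.weyl // -(w.1 γ) ∈ R.pos} : ℚ) / (Nat.card R.weyl : ℚ)) :=
  orthogonal_roots_independent_general R β γ hβ horth

end
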